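/- Consider the augmented system (f_A, g_A, h_A) on ℝ × ℝ^{n_A} built from infinitely differentiable F : ℝ×ℝ^n → ℝ^n, G : ℝ×ℝ^n → ℝ^{n×r}, h : ℝ×ℝ^n → ℝ^m with r = m, and its integral augmented system (f_I, g_I, h_I) on ℝ × ℝ^{n_A+m} for a parameter β > 0. Suppose there exist σ ∈ ℕ^m with σ_k ≥ 1 and a point (t_0, x_A^0) ∈ ℝ × ℝ^{n_A} such that, for each k ∈ {1,…,m}: L_{g_A} L_{f_A}^{i} h_{A,k}(t,x_A) = 0 for all (t,x_A) and all 0 ≤ i ≤ σ_k − 2, and L_{g_A} L_{f_A}^{σ_k−1} h_{A,k}(t_0, x_A^0) ≠ 0. Then: (i) for each k, L_{g_I} L_{f_I}^{i} h_{I,k}(t,x_I) = 0 for all (t,x_I) ∈ ℝ × ℝ^{n_A+m} and all 0 ≤ i ≤ σ_k − 1; (ii) for each k and every ξ ∈ ℝ^m, L_{g_I} L_{f_I}^{σ_k} h_{I,k}(t_0, (x_A^0, ξ)) ≠ 0; and (iii) the matrix Γ_{g_I}(t,x_I) ∈ ℝ^{m×m}, whose k-th row is L_{g_I} L_{f_I}^{σ_k}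 h_{I,k}(t,x_I), has zero i-th column, hence does not have full column rank and is not invertible, at every (t,x_I) with x_I = ((x,z̃),ξ) such that z_i^{(0)} = 0 for some i ∈ {1,…,r}. -/

import Mathlib

noncomputable section

open Real Finset

/-- One-step Lie derivative of a scalar function `ψ` along the time-varying vector field `F`
on a general state space: `L_F ψ (t,x) = (∂ₓ ψ)·F + ∂ₜ ψ`, expressed as the total (Fréchet)
derivative of `ψ` in the direction `(1, F(t,x))`. -/
def lieF {E : Type*} [NormedAddCommGroup E] [NormedSpace ℝ E]
    (F : ℝ × E → E) (ψ : ℝ × E → ℝ) : ℝ × E → ℝ :=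
  fun p => fderiv ℝ ψ p (1, F p)

/-- Iterated Lie derivative `L_F^j ψ`, with `L_F^0 ψ = ψ`. -/
def lieFIter {E : Type*} [NormedAddCommGroup E] [NormedSpace ℝ E]
    (F : ℝ × E → E) (ψ : ℝ × E → ℝ) (j : ℕ) : ℝ × E → ℝ :=
  (lieF F)^[j] ψ

/-- Mixed Lie derivative `L_Ĝ ψ (t,x) = (∂ₓ ψ)(t,x)·Ĝ(t,x) ∈ ℝ^{1×r}` as a row vector,
where the matrix field `Ĝ` is given through its columns `Ĝ(t,x) j ∈ E`. -/
def lieGcol {E : Type*} [NormedAddCommGroup E] [NormedSpace ℝ E] {r : ℕ}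
    (G : ℝ × E → Fin r → E) (ψ : ℝ × E → ℝ) : ℝ × E → Fin r → ℝ :=
  fun p j => fderiv ℝ ψ p (0, G p j)

/-- The augmented state space `x_A = (x, z̃)`, where `z̃` stacks the scalars
`z_k^{(0)}, …, z_k^{(ρ_k-1)}` for `k = 1,…,m`. -/
abbrev AugState (n m : ℕ) (ρ : Fin m → ℕ) : Type :=
  (Fin n → ℝ) × (∀ k : Fin m, Fin (ρ k) → ℝ)

/-- The augmented vector field `f_A`: first block `F(t,x)`; the `k`-th slack block is the
shift `(z_k^{(1)}, …, z_k^{(ρ_k-1)}, 0)`. -/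
def augF {n m : ℕ} (ρ : Fin m → ℕ) (F : ℝ × (Fin n → ℝ) → Fin n → ℝ) :
    ℝ × AugState n m ρ → AugState n m ρ :=
  fun p =>
    (F (p.1, p.2.1),
      fun k i => if hi : (i : ℕ) + 1 < ρ k then p.2.2 k ⟨(i : ℕ) + 1, hi⟩ else 0)

/-- The columns of the augmented input matrix `g_A`: first `n` rows `G(t,x)·D(z)` with
`D(z) = diag(z_1^{(0)},…,z_r^{(0)})`; remaining rows zero, except that the row in the slot
of `z_k^{(ρ_k-1)}` equals the `k`-th standard basis row. -/
def augG {n m : ℕ} (ρ : Fin m → ℕ) (G : ℝ × (Fin n → ℝ) → Fin n → Fin m → ℝ) :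
    ℝ × AugState n m ρ → Fin m → AugState n m ρ :=
  fun p j =>
    ((fun a => G (p.1, p.2.1) a j *
        (if h : 0 < ρ j then p.2.2 j ⟨0, h⟩ else 0)),
      fun k i => if k = j ∧ (i : ℕ) = ρ k - 1 then 1 else 0)

/-- The augmented output `h_A(t,(x,z̃)) = h(t,x)`, `l`-th component. -/
def augH {n m : ℕ} (ρ : Fin m → ℕ) (h : ℝ × (Fin n → ℝ) → Fin m → ℝ) (l : Fin m) :
    ℝ × AugState n m ρ → ℝ :=
  fun p => h (p.1, p.2.1) l

/-- The integral augmented state space `x_I = (x_A, ξ)`. -/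
abbrev IntState (n m : ℕ) (ρ : Fin m → ℕ) : Type :=
  AugState n m ρ × (Fin m → ℝ)

/-- The bounded saturation function `s_β(v) = 2β(1/(e^{-v}+1) - 1/2)` (Eq. (16) of the paper). -/
def sBeta (β v : ℝ) : ℝ := 2 * β * (1 / (Real.exp (-v) + 1) - 1 / 2)

/-- The integral augmented vector field `f_I(t,(x_A,ξ)) = (f_A(t,x_A) + g_A(t,x_A)·s_β(ξ), 0)`. -/
def intF {n m : ℕ} (ρ : Fin m → ℕ) (F : ℝ × (Fin n → ℝ) → Fin n → ℝ)
    (G : ℝ × (Fin n → ℝ) → Fin n → Fin m → ℝ) (β : ℝ) :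
    ℝ × IntState n m ρ → IntState n m ρ :=
  fun p =>
    (augF ρ F (p.1, p.2.1) + ∑ j, sBeta β (p.2.2 j) • augG ρ G (p.1, p.2.1) j, 0)

/-- The columns of the integral augmented input matrix `g_I = (0 ; I_m)`. -/
def intG {n m : ℕ} (ρ : Fin m → ℕ) :
    ℝ × IntState n m ρ → Fin m → IntState n m ρ :=
  fun _ j => (0, Pi.single j 1)

/-- The integral augmented output `h_I(t,(x_A,ξ)) = h_A(t,x_A)`, `l`-th component. -/
def intH {n m : ℕ} (ρ : Fin m → ℕ) (h : ℝ × (Fin n → ℝ) → Fin m → ℝ) (l : Fin m) :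
    ℝ × IntState n m ρ → ℝ :=
  fun p => augH ρ h l (p.1, p.2.1)

/-! Neither `h_A` nor its `f_A`-iterates depend on the slack variables, and `g_I` only moves `ξ`.
Along `f_I = f_A + g_A s_β(ξ)` each Lie derivative of a function of `x_A` picks up the feedback term
`Σ_j s_β(ξ_j) L_{g_A,j} L_{f_A}^i h_{A,k}`, which vanishes for `i ≤ σ_k - 2`; so the first `σ_k`
iterates of `h_{I,k}` along `f_I` are those along `f_A`, independent of `ξ`, and the `σ_k`-th one is
the first to see `ξ`. Its `ξ_j`-derivative is `s_β'(ξ_j) L_{g_A,j} L_{f_A}^{σ_k-1} h_{A,k}` with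
`s_β' > 0`, and `L_{g_A,j}` carries the factor `z_j^{(0)}` coming from `D(z)`. -/

section LieDerivative

variable {E E' : Type*} [NormedAddCommGroup E] [NormedSpace ℝ E]
  [NormedAddCommGroup E'] [NormedSpace ℝ E']

theorem lieFIter_succ (F : ℝ × E → E) (ψ : ℝ × E → ℝ) (j : ℕ) :
    lieFIter F ψ (j + 1) = lieF F (lieFIter F ψ j) :=
  Function.iterate_succ_apply' _ _ _

theorem contDiff_lieF {F : ℝ × E → E} {ψ : ℝ × E → ℝ}
    (hF : ContDiff ℝ (⊤ : ℕ∞) F) (hψ : ContDiff ℝ (⊤ : ℕ∞) ψ) :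
    ContDiff ℝ (⊤ : ℕ∞) (lieF F ψ) :=
  (hψ.fderiv_right (by exact_mod_cast le_top)).clm_apply (contDiff_const.prodMk hF)

theorem contDiff_lieFIter {F : ℝ × E → E} {ψ : ℝ × E → ℝ}
    (hF : ContDiff ℝ (⊤ : ℕ∞) F) (hψ : ContDiff ℝ (⊤ : ℕ∞) ψ) (j : ℕ) :
    ContDiff ℝ (⊤ : ℕ∞) (lieFIter F ψ j) := by
  induction j with
  | zero => exact hψ
  | succ j ih => rw [lieFIter_succ]; exact contDiff_lieF hF ih

theorem contDiff_lieGcol {r : ℕ} {G : ℝ × E → Fin r → E} {ψ : ℝ × E → ℝ}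
    (hG : ContDiff ℝ (⊤ : ℕ∞) G) (hψ : ContDiff ℝ (⊤ : ℕ∞) ψ) (j : Fin r) :
    ContDiff ℝ (⊤ : ℕ∞) (fun p => lieGcol G ψ p j) :=
  (hψ.fderiv_right (by exact_mod_cast le_top)).clm_apply
    (contDiff_const.prodMk (contDiff_pi.mp hG j))

theorem fderiv_comp_clm_apply {ψ : E' → ℝ} (P : E →L[ℝ] E') {p : E}
    (hψ : DifferentiableAt ℝ ψ (P p)) (v : E) :
    fderiv ℝ (ψ ∘ P) p v = fderiv ℝ ψ (P p) (P v) := by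
  rw [fderiv_comp p hψ P.differentiableAt, P.fderiv]
  rfl

variable {E₀ : Type*} [NormedAddCommGroup E₀] [NormedSpace ℝ E₀]

theorem lieFIter_comp_of_intertwining {f : ℝ × E → E} {F : ℝ × E₀ → E₀} {ψ : ℝ × E₀ → ℝ}
    (P : (ℝ × E) →L[ℝ] (ℝ × E₀)) (hP : ∀ p, P (1, f p) = (1, F (P p)))
    (hF : ContDiff ℝ (⊤ : ℕ∞) F) (hψ : ContDiff ℝ (⊤ : ℕ∞) ψ) (j : ℕ) :
    lieFIter f (ψ ∘ P) j = lieFIter F ψ j ∘ P := by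
  induction j with
  | zero => rfl
  | succ j ih =>
    funext p
    have hd := (contDiff_lieFIter hF hψ j).differentiable (by simp) (P p)
    rw [lieFIter_succ, lieFIter_succ, ih]
    exact (fderiv_comp_clm_apply P hd _).trans (congrArg _ (hP p))

end LieDerivative

theorem Matrix.rank_lt_card_of_col_eq_zero {K m n : Type*} [Field K] [Fintype m] [Fintype n]
    (M : Matrix m n K) (j : n) (hj : ∀ i, M i j = 0) : M.rank < Fintype.card n := by
  classical
  rw [← M.rank_transpose]
  calc M.transpose.rank ≤ (Finset.univ.erase j).card :=
        M.transpose.rank_le_card_of_support_subset _ fun i hi =>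
          Finset.mem_erase.mpr ⟨by rintro rfl; exact hi (funext hj), Finset.mem_univ i⟩
    _ < Fintype.card n := Finset.card_erase_lt_of_mem (Finset.mem_univ j)

theorem Matrix.not_isUnit_of_col_eq_zero {K n : Type*} [Field K] [Fintype n] [DecidableEq n]
    (M : Matrix n n K) (j : n) (hj : ∀ i, M i j = 0) : ¬ IsUnit M := by
  rw [Matrix.isUnit_iff_isUnit_det, Matrix.det_eq_zero_of_column_eq_zero j hj]
  exact not_isUnit_zero

theorem hasDerivAt_sBeta (β v : ℝ) :
    HasDerivAt (sBeta β) (2 * β * (Real.exp (-v) / (Real.exp (-v) + 1) ^ 2)) v := by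
  have hpos : Real.exp (-v) + 1 ≠ 0 := by positivity
  have hden : HasDerivAt (fun w => Real.exp (-w) + 1) (-Real.exp (-v)) v := by
    simpa using ((Real.hasDerivAt_exp (-v)).comp v (hasDerivAt_neg v)).add_const 1
  have h := ((hden.inv hpos).sub_const (1 / 2)).const_mul (2 * β)
  rw [neg_neg] at h
  exact h.congr_of_eventuallyEq (Filter.Eventually.of_forall fun w => by simp [sBeta])

theorem deriv_sBeta_pos {β : ℝ} (hβ : 0 < β) (v : ℝ) : 0 < deriv (sBeta β) v := by
  rw [(hasDerivAt_sBeta β v).deriv]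
  positivity

theorem differentiable_sBeta (β : ℝ) : Differentiable ℝ (sBeta β) :=
  fun v => (hasDerivAt_sBeta β v).differentiableAt

section Augmented

variable {n m : ℕ} {ρ : Fin m → ℕ}

def augProj (n m : ℕ) (ρ : Fin m → ℕ) : (ℝ × AugState n m ρ) →L[ℝ] ℝ × (Fin n → ℝ) :=
  (ContinuousLinearMap.id ℝ ℝ).prodMap (ContinuousLinearMap.fst ℝ _ _)

def inputColumns (G : ℝ × (Fin n → ℝ) → Fin n → Fin m → ℝ) :
    ℝ × (Fin n → ℝ) → Fin m → Fin n → ℝ :=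
  fun q j a => G q a j

theorem lieFIter_augF_augH {F : ℝ × (Fin n → ℝ) → Fin n → ℝ} {h : ℝ × (Fin n → ℝ) → Fin m → ℝ}
    (hF : ContDiff ℝ (⊤ : ℕ∞) F) (hh : ContDiff ℝ (⊤ : ℕ∞) h) (k : Fin m) (i : ℕ) :
    lieFIter (augF ρ F) (augH ρ h k) i = lieFIter F (fun q => h q k) i ∘ augProj n m ρ :=
  lieFIter_comp_of_intertwining (augProj n m ρ) (fun _ => rfl) hF (contDiff_pi.mp hh k) i

theorem contDiff_lieFIter_augF_augH {F : ℝ × (Fin n → ℝ) → Fin n → ℝ}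
    {h : ℝ × (Fin n → ℝ) → Fin m → ℝ} (hF : ContDiff ℝ (⊤ : ℕ∞) F)
    (hh : ContDiff ℝ (⊤ : ℕ∞) h) (k : Fin m) (i : ℕ) :
    ContDiff ℝ (⊤ : ℕ∞) (lieFIter (augF ρ F) (augH ρ h k) i) := by
  rw [lieFIter_augF_augH hF hh]
  exact (contDiff_lieFIter hF (contDiff_pi.mp hh k) i).comp (augProj n m ρ).contDiff

theorem lieGcol_augG_comp_augProj (G : ℝ × (Fin n → ℝ) → Fin n → Fin m → ℝ)
    {ψ : ℝ × (Fin n → ℝ) → ℝ} {p : ℝ × AugState n m ρ}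
    (hψ : DifferentiableAt ℝ ψ (augProj n m ρ p)) {j : Fin m} (hj : 0 < ρ j) :
    lieGcol (augG ρ G) (ψ ∘ augProj n m ρ) p j
      = p.2.2 j ⟨0, hj⟩ * lieGcol (inputColumns G) ψ (augProj n m ρ p) j := by
  have hdir : augProj n m ρ (0, augG ρ G p j)
      = p.2.2 j ⟨0, hj⟩ • (0, inputColumns G (p.1, p.2.1) j) := by
    ext a
    · simp [augProj]
    · simp [augProj, augG, inputColumns, hj, mul_comm]
  rw [lieGcol, fderiv_comp_clm_apply _ hψ, hdir, map_smul, smul_eq_mul]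
  rfl

theorem contDiff_augG {G : ℝ × (Fin n → ℝ) → Fin n → Fin m → ℝ}
    (hG : ContDiff ℝ (⊤ : ℕ∞) G) : ContDiff ℝ (⊤ : ℕ∞) (augG ρ G) := by
  refine contDiff_pi.mpr fun j => ContDiff.prodMk (contDiff_pi.mpr fun a => ?_) contDiff_const
  have hGaj : ContDiff ℝ (⊤ : ℕ∞) fun q : ℝ × (Fin n → ℝ) => G q a j :=
    contDiff_pi.mp (contDiff_pi.mp hG a) j
  by_cases hj : 0 < ρ j
  · simp only [dif_pos hj]
    exact (hGaj.comp (contDiff_fst.prodMk contDiff_snd.fst)).mul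
      (contDiff_pi.mp (contDiff_pi.mp contDiff_snd.snd j) _)
  · simp only [dif_neg hj, mul_zero]
    exact contDiff_const

end Augmented

section Integral

variable {n m : ℕ} {ρ : Fin m → ℕ}

def intProj (n m : ℕ) (ρ : Fin m → ℕ) : (ℝ × IntState n m ρ) →L[ℝ] ℝ × AugState n m ρ :=
  (ContinuousLinearMap.id ℝ ℝ).prodMap (ContinuousLinearMap.fst ℝ _ _)

theorem lieF_intF_comp_intProj (F : ℝ × (Fin n → ℝ) → Fin n → ℝ)
    (G : ℝ × (Fin n → ℝ) → Fin n → Fin m → ℝ) (β : ℝ) {ψ : ℝ × AugState n m ρ → ℝ}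
    {p : ℝ × IntState n m ρ} (hψ : DifferentiableAt ℝ ψ (intProj n m ρ p)) :
    lieF (intF ρ F G β) (ψ ∘ intProj n m ρ) p
      = lieF (augF ρ F) ψ (intProj n m ρ p)
        + ∑ j, sBeta β (p.2.2 j) * lieGcol (augG ρ G) ψ (intProj n m ρ p) j := by
  have hdir : intProj n m ρ (1, intF ρ F G β p)
      = (1, augF ρ F (intProj n m ρ p))
        + ∑ j, sBeta β (p.2.2 j) • ((0 : ℝ), augG ρ G (intProj n m ρ p) j) := by
    ext1
    · simp [intProj, Prod.fst_sum]
    · simp [intProj, intF, Prod.snd_sum]; rfl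
  rw [lieF, fderiv_comp_clm_apply _ hψ, hdir, map_add, map_sum]
  simp only [map_smul, smul_eq_mul]
  rfl

theorem lieGcol_intG_comp_intProj {ψ : ℝ × AugState n m ρ → ℝ} {p : ℝ × IntState n m ρ}
    (hψ : DifferentiableAt ℝ ψ (intProj n m ρ p)) :
    lieGcol (intG ρ) (ψ ∘ intProj n m ρ) p = 0 := by
  funext j
  rw [lieGcol, fderiv_comp_clm_apply _ hψ]
  exact (fderiv ℝ ψ _).map_zero

theorem lieFIter_intF_comp_intProj (F : ℝ × (Fin n → ℝ) → Fin n → ℝ)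
    (G : ℝ × (Fin n → ℝ) → Fin n → Fin m → ℝ) (β : ℝ) {ψ : ℝ × AugState n m ρ → ℝ}
    (hψ : ∀ i, ContDiff ℝ (⊤ : ℕ∞) (lieFIter (augF ρ F) ψ i)) {i : ℕ}
    (hzero : ∀ i' < i, ∀ p, lieGcol (augG ρ G) (lieFIter (augF ρ F) ψ i') p = 0) :
    lieFIter (intF ρ F G β) (ψ ∘ intProj n m ρ) i
      = lieFIter (augF ρ F) ψ i ∘ intProj n m ρ := by
  induction i with
  | zero => rfl
  | succ i ih =>
    funext p
    rw [lieFIter_succ, ih fun i' hi' => hzero i' (by omega),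
      lieF_intF_comp_intProj F G β ((hψ i).differentiable (by simp) _)]
    simp [hzero i (Nat.lt_succ_self i), lieFIter_succ]

theorem lieGcol_intG_feedback {Φ : ℝ × AugState n m ρ → ℝ}
    {c : ℝ × AugState n m ρ → Fin m → ℝ} {u : ℝ → ℝ} (hΦ : Differentiable ℝ Φ)
    (hc : ∀ l, Differentiable ℝ (fun a => c a l)) (hu : Differentiable ℝ u)
    (p : ℝ × IntState n m ρ) (j : Fin m) :
    lieGcol (intG ρ)
        (fun q => Φ (intProj n m ρ q) + ∑ l, u (q.2.2 l) * c (intProj n m ρ q) l) p j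
      = deriv u (p.2.2 j) * c (intProj n m ρ p) j := by
  set Q := intProj n m ρ
  let ξcoord : Fin m → (ℝ × IntState n m ρ) →L[ℝ] ℝ := fun l =>
    (ContinuousLinearMap.proj l).comp
      ((ContinuousLinearMap.snd ℝ _ _).comp (ContinuousLinearMap.snd ℝ _ _))
  have hderiv : HasFDerivAt (fun q => Φ (Q q) + ∑ l, u (q.2.2 l) * c (Q q) l)
      ((fderiv ℝ Φ (Q p)).comp Q + ∑ l, (u (p.2.2 l) • (fderiv ℝ (fun a => c a l) (Q p)).comp Q
        + c (Q p) l • deriv u (p.2.2 l) • ξcoord l)) p := by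
    refine ((hΦ _).hasFDerivAt.comp p Q.hasFDerivAt).add (HasFDerivAt.fun_sum fun l _ => ?_)
    exact ((hu _).hasDerivAt.comp_hasFDerivAt p (ξcoord l).hasFDerivAt).mul
      ((hc l _).hasFDerivAt.comp p Q.hasFDerivAt)
  have hQ : Q (0, intG ρ p j) = 0 := rfl
  have hcoord : ∀ l, ξcoord l (0, intG ρ p j) = (Pi.single j (1 : ℝ) : Fin m → ℝ) l :=
    fun l => rfl
  rw [lieGcol, hderiv.fderiv]
  simp [hQ, hcoord, Pi.single_apply, mul_comm]

theorem lieGcol_intG_lieFIter_intF_succ {F : ℝ × (Fin n → ℝ) → Fin n → ℝ}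
    {G : ℝ × (Fin n → ℝ) → Fin n → Fin m → ℝ} (β : ℝ) (hG : ContDiff ℝ (⊤ : ℕ∞) G)
    {ψ : ℝ × AugState n m ρ → ℝ} (hψ : ∀ i, ContDiff ℝ (⊤ : ℕ∞) (lieFIter (augF ρ F) ψ i))
    {i : ℕ} (hzero : ∀ i' < i, ∀ p, lieGcol (augG ρ G) (lieFIter (augF ρ F) ψ i') p = 0)
    (p : ℝ × IntState n m ρ) (j : Fin m) :
    lieGcol (intG ρ) (lieFIter (intF ρ F G β) (ψ ∘ intProj n m ρ) (i + 1)) p j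
      = deriv (sBeta β) (p.2.2 j)
          * lieGcol (augG ρ G) (lieFIter (augF ρ F) ψ i) (intProj n m ρ p) j := by
  have hdiff : ∀ i', Differentiable ℝ (lieFIter (augF ρ F) ψ i') :=
    fun i' => (hψ i').differentiable (by simp)
  have htop : lieFIter (intF ρ F G β) (ψ ∘ intProj n m ρ) (i + 1)
      = fun q => lieF (augF ρ F) (lieFIter (augF ρ F) ψ i) (intProj n m ρ q)
          + ∑ l, sBeta β (q.2.2 l)
              * lieGcol (augG ρ G) (lieFIter (augF ρ F) ψ i) (intProj n m ρ q) l := by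
    funext q
    rw [lieFIter_succ, lieFIter_intF_comp_intProj F G β hψ hzero]
    exact lieF_intF_comp_intProj F G β (hdiff i _)
  rw [htop]
  refine lieGcol_intG_feedback ?_ (fun l => ?_) (differentiable_sBeta β) p j
  · rw [← lieFIter_succ]
    exact hdiff (i + 1)
  · exact (contDiff_lieGcol (contDiff_augG hG) (hψ i) l).differentiable (by simp)

end Integral

/-- **Corollary 1 of the paper.** The relative degree of the integral augmented system
exceeds that of the augmented system by one: (i) `L_{g_I} L_{f_I}^i h_{I,k} ≡ 0` for
`0 ≤ i ≤ σ_k - 1`; (ii) `L_{g_I} L_{f_I}^{σ_k} h_{I,k}(t₀,(x_A⁰,ξ)) ≠ 0` for every `ξ`;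
and (iii) the matrix `Γ_{g_I}`, whose `k`-th row is `L_{g_I} L_{f_I}^{σ_k} h_{I,k}`, has a
zero `i₀`-th column — hence does not have full column rank and is not invertible —
wherever the slack variable `z_{i₀}^{(0)}` vanishes. -/
theorem integral_system_relative_degree_and_rank_loss
    {n m : ℕ} (ρ : Fin m → ℕ) (hρ : ∀ k, 1 ≤ ρ k)
    (F : ℝ × (Fin n → ℝ) → Fin n → ℝ)
    (G : ℝ × (Fin n → ℝ) → Fin n → Fin m → ℝ)
    (h : ℝ × (Fin n → ℝ) → Fin m → ℝ)
    (hF : ContDiff ℝ (⊤ : ℕ∞) F) (hG : ContDiff ℝ (⊤ : ℕ∞) G)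
    (hh : ContDiff ℝ (⊤ : ℕ∞) h)
    (β : ℝ) (hβ : 0 < β)
    (σ : Fin m → ℕ) (hσ : ∀ k, 1 ≤ σ k)
    (hzero : ∀ k : Fin m, ∀ i : ℕ, i + 2 ≤ σ k →
      ∀ p : ℝ × AugState n m ρ,
        lieGcol (augG ρ G) (lieFIter (augF ρ F) (augH ρ h k) i) p = 0)
    (t₀ : ℝ) (xA₀ : AugState n m ρ)
    (hne : ∀ k : Fin m,
      lieGcol (augG ρ G) (lieFIter (augF ρ F) (augH ρ h k) (σ k - 1)) (t₀, xA₀) ≠ 0) :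
    -- (i)
    (∀ k : Fin m, ∀ i : ℕ, i ≤ σ k - 1 → ∀ p : ℝ × IntState n m ρ,
      lieGcol (intG ρ) (lieFIter (intF ρ F G β) (intH ρ h k) i) p = 0) ∧
    -- (ii)
    (∀ k : Fin m, ∀ ξ : Fin m → ℝ,
      lieGcol (intG ρ) (lieFIter (intF ρ F G β) (intH ρ h k) (σ k)) (t₀, (xA₀, ξ)) ≠ 0) ∧
    -- (iii)
    (∀ (t : ℝ) (x : Fin n → ℝ) (z : ∀ k : Fin m, Fin (ρ k) → ℝ) (ξ : Fin m → ℝ)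
        (i₀ : Fin m), z i₀ ⟨0, hρ i₀⟩ = 0 →
      (∀ k : Fin m,
        lieGcol (intG ρ) (lieFIter (intF ρ F G β) (intH ρ h k) (σ k)) (t, ((x, z), ξ)) i₀
          = 0) ∧
      ((Matrix.of fun k j =>
          lieGcol (intG ρ) (lieFIter (intF ρ F G β) (intH ρ h k) (σ k)) (t, ((x, z), ξ)) j :
        Matrix (Fin m) (Fin m) ℝ)).rank < m ∧
      ¬ IsUnit ((Matrix.of fun k j =>
          lieGcol (intG ρ) (lieFIter (intF ρ F G β) (intH ρ h k) (σ k)) (t, ((x, z), ξ)) j :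
        Matrix (Fin m) (Fin m) ℝ))) := by
  have hsmooth := contDiff_lieFIter_augF_augH (ρ := ρ) hF hh
  have hΓ : ∀ k p j, lieGcol (intG ρ) (lieFIter (intF ρ F G β) (intH ρ h k) (σ k)) p j
      = deriv (sBeta β) (p.2.2 j) * lieGcol (augG ρ G)
          (lieFIter (augF ρ F) (augH ρ h k) (σ k - 1)) (intProj n m ρ p) j := by
    intro k p j
    obtain ⟨s, hs⟩ : ∃ s, σ k = s + 1 := ⟨σ k - 1, by have := hσ k; omega⟩
    rw [hs, Nat.add_sub_cancel]
    exact lieGcol_intG_lieFIter_intF_succ β hG (hsmooth k)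
      (fun i' hi' => hzero k i' (by omega)) p j
  refine ⟨fun k i hi p => ?_, fun k ξ hΓ0 => ?_, fun t x z ξ i₀ hz => ?_⟩
  · change lieGcol (intG ρ) (lieFIter (intF ρ F G β) (augH ρ h k ∘ intProj n m ρ) i) p = 0
    rw [lieFIter_intF_comp_intProj F G β (hsmooth k) fun i' hi' => hzero k i' (by omega)]
    exact lieGcol_intG_comp_intProj ((hsmooth k i).differentiable (by simp) _)
  · obtain ⟨j, hj⟩ := Function.ne_iff.mp (hne k)
    have hΓkj := congrFun hΓ0 j
    rw [hΓ] at hΓkj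
    exact mul_ne_zero (deriv_sBeta_pos hβ _).ne' hj hΓkj
  · have hcol : ∀ k, lieGcol (intG ρ) (lieFIter (intF ρ F G β) (intH ρ h k) (σ k))
        (t, ((x, z), ξ)) i₀ = 0 := by
      intro k
      rw [hΓ, lieFIter_augF_augH hF hh, lieGcol_augG_comp_augProj G
        ((contDiff_lieFIter hF (contDiff_pi.mp hh k) _).differentiable (by simp) _) (hρ i₀)]
      simp [intProj, hz]
    exact ⟨hcol, (Matrix.rank_lt_card_of_col_eq_zero _ i₀ hcol).trans_eq (Fintype.card_fin m),
      Matrix.not_isUnit_of_col_eq_zero _ i₀ hcol⟩
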